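/- Suppose u, v : ℝ³ → ℝ are smooth, v_x is nowhere zero, and (u,v) satisfies the nonlinear Lax system at every point of ℝ³. Then: (a) the pair (ũ,ṽ) with ũ(t,x,y) = u(−t,−x,−y) and ṽ(t,x,y) = v(−t,−x,−y) satisfies the nonlinear Lax system, with ṽ_x nowhere zero; (b) the pair (u, −v) satisfies the nonlinear Lax system, with (−v)_x nowhere zero; (c) if in addition u_{xy} is nowhere zero, then the pair (ũ,ṽ) with ũ(t,x,y) = u(t,y,x) and ṽ(t,x,y) = v(t,y,x) satisfies the nonlinear Lax system, with ṽ_x nowhere zero. -/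

import Mathlib

/-- Partial derivative with respect to `t` of a function on `ℝ³ = ℝ × ℝ × ℝ` with
coordinates `(t, x, y)`. -/
noncomputable def pt (u : ℝ × ℝ × ℝ → ℝ) : ℝ × ℝ × ℝ → ℝ :=
  fun p => deriv (fun s => u (s, p.2.1, p.2.2)) p.1

/-- Partial derivative with respect to `x`. -/
noncomputable def px (u : ℝ × ℝ × ℝ → ℝ) : ℝ × ℝ × ℝ → ℝ :=
  fun p => deriv (fun s => u (p.1, s, p.2.2)) p.2.1

/-- Partial derivative with respect to `y`. -/
noncomputable def py (u : ℝ × ℝ × ℝ → ℝ) : ℝ × ℝ × ℝ → ℝ :=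
  fun p => deriv (fun s => u (p.1, p.2.1, s)) p.2.2

/-- The pair `(u, v)` satisfies, at every point of `ℝ³`, the nonlinear Lax system
`v_t = (1/3)(v_x³ − u_{xy}³/v_x³) + u_{xx}v_x − u_{xy}u_{yy}/v_x`,
`v_y = −u_{xy}/v_x`. -/
def SatisfiesLax (u v : ℝ × ℝ × ℝ → ℝ) : Prop :=
  ∀ p : ℝ × ℝ × ℝ,
    pt v p = (1 / 3) * ((px v p) ^ 3 - (px (py u) p) ^ 3 / (px v p) ^ 3) +
      px (px u) p * px v p - px (py u) p * py (py u) p / px v p ∧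
    py v p = -(px (py u) p) / px v p

section helpers

variable {f g : ℝ × ℝ × ℝ → ℝ}

private lemma deriv_along (hf : ContDiff ℝ (⊤ : ℕ∞) f) {c : ℝ → ℝ × ℝ × ℝ} {d : ℝ × ℝ × ℝ} {s : ℝ}
    (hc : HasDerivAt c d s) : deriv (fun r => f (c r)) s = fderiv ℝ f (c s) d :=
  (((hf.differentiable (by simp) (c s)).hasFDerivAt).comp_hasDerivAt s hc).deriv

private lemma pt_eq (hf : ContDiff ℝ (⊤ : ℕ∞) f) (p : ℝ × ℝ × ℝ) :
    pt f p = fderiv ℝ f p (1, 0, 0) :=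
  deriv_along hf <|
    (hasDerivAt_id p.1).prodMk ((hasDerivAt_const _ _).prodMk (hasDerivAt_const _ _))

private lemma px_eq (hf : ContDiff ℝ (⊤ : ℕ∞) f) (p : ℝ × ℝ × ℝ) :
    px f p = fderiv ℝ f p (0, 1, 0) :=
  deriv_along hf <|
    (hasDerivAt_const _ _).prodMk ((hasDerivAt_id p.2.1).prodMk (hasDerivAt_const _ _))

private lemma py_eq (hf : ContDiff ℝ (⊤ : ℕ∞) f) (p : ℝ × ℝ × ℝ) :
    py f p = fderiv ℝ f p (0, 0, 1) :=
  deriv_along hf <|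
    (hasDerivAt_const _ _).prodMk ((hasDerivAt_const _ _).prodMk (hasDerivAt_id p.2.2))

private lemma contDiff_px (hf : ContDiff ℝ (⊤ : ℕ∞) f) : ContDiff ℝ (⊤ : ℕ∞) (px f) := by
  have : px f = fun p => fderiv ℝ f p (0, 1, 0) := funext (px_eq hf)
  rw [this]; exact (hf.fderiv_right le_rfl).clm_apply contDiff_const

private lemma contDiff_py (hf : ContDiff ℝ (⊤ : ℕ∞) f) : ContDiff ℝ (⊤ : ℕ∞) (py f) := by
  have : py f = fun p => fderiv ℝ f p (0, 0, 1) := funext (py_eq hf)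
  rw [this]; exact (hf.fderiv_right le_rfl).clm_apply contDiff_const

private lemma fderiv_dir (hf : ContDiff ℝ (⊤ : ℕ∞) f) (v w : ℝ × ℝ × ℝ) (p : ℝ × ℝ × ℝ) :
    fderiv ℝ (fun q => fderiv ℝ f q w) p v = fderiv ℝ (fderiv ℝ f) p v w := by
  have hg : HasFDerivAt (fderiv ℝ f) (fderiv ℝ (fderiv ℝ f) p) p :=
    ((hf.fderiv_right (m := (⊤ : ℕ∞)) le_rfl).differentiable (by simp) p).hasFDerivAt
  have h := hg.clm_apply (hasFDerivAt_const w p)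
  rw [h.fderiv]
  simp

/-- Clairaut's theorem in this setting. -/
private lemma clairaut (hf : ContDiff ℝ (⊤ : ℕ∞) f) (p : ℝ × ℝ × ℝ) :
    py (px f) p = px (py f) p := by
  have hx : px f = fun q => fderiv ℝ f q (0, 1, 0) := funext (px_eq hf)
  have hy : py f = fun q => fderiv ℝ f q (0, 0, 1) := funext (py_eq hf)
  have h1 : py (px f) p = fderiv ℝ (fderiv ℝ f) p (0, 0, 1) (0, 1, 0) := by
    rw [py_eq (contDiff_px hf) p, hx, fderiv_dir hf]
  have h2 : px (py f) p = fderiv ℝ (fderiv ℝ f) p (0, 1, 0) (0, 0, 1) := by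
    rw [px_eq (contDiff_py hf) p, hy, fderiv_dir hf]
  rw [h1, h2]
  exact second_derivative_symmetric
    (fun y => (hf.differentiable (by simp) y).hasFDerivAt)
    (((hf.fderiv_right (m := (⊤ : ℕ∞)) le_rfl).differentiable (by simp) p).hasFDerivAt) _ _

/-! Chain rules for the point reflection `σ : p ↦ -p`. -/

private lemma hc_sigma_t (p : ℝ × ℝ × ℝ) :
    HasDerivAt (fun s : ℝ => ((-s, -p.2.1, -p.2.2) : ℝ × ℝ × ℝ)) (-1, 0, 0) p.1 :=
  ((hasDerivAt_id p.1).neg).prodMk ((hasDerivAt_const _ _).prodMk (hasDerivAt_const _ _))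

private lemma hc_sigma_x (p : ℝ × ℝ × ℝ) :
    HasDerivAt (fun s : ℝ => ((-p.1, -s, -p.2.2) : ℝ × ℝ × ℝ)) (0, -1, 0) p.2.1 :=
  (hasDerivAt_const _ _).prodMk (((hasDerivAt_id p.2.1).neg).prodMk (hasDerivAt_const _ _))

private lemma hc_sigma_y (p : ℝ × ℝ × ℝ) :
    HasDerivAt (fun s : ℝ => ((-p.1, -p.2.1, -s) : ℝ × ℝ × ℝ)) (0, 0, -1) p.2.2 :=
  (hasDerivAt_const _ _).prodMk ((hasDerivAt_const _ _).prodMk ((hasDerivAt_id p.2.2).neg))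

private lemma pt_sigma (hf : ContDiff ℝ (⊤ : ℕ∞) f) (p : ℝ × ℝ × ℝ) :
    pt (fun q => f (-q.1, -q.2.1, -q.2.2)) p = -(pt f (-p.1, -p.2.1, -p.2.2)) := by
  have h := deriv_along hf (hc_sigma_t p)
  have hw : ((-1, 0, 0) : ℝ × ℝ × ℝ) = -((1, 0, 0) : ℝ × ℝ × ℝ) := by norm_num
  rw [hw, map_neg] at h
  rw [pt_eq hf ((-p.1, -p.2.1, -p.2.2))]
  exact h

private lemma px_sigma (hf : ContDiff ℝ (⊤ : ℕ∞) f) (p : ℝ × ℝ × ℝ) :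
    px (fun q => f (-q.1, -q.2.1, -q.2.2)) p = -(px f (-p.1, -p.2.1, -p.2.2)) := by
  have h := deriv_along hf (hc_sigma_x p)
  have hw : ((0, -1, 0) : ℝ × ℝ × ℝ) = -((0, 1, 0) : ℝ × ℝ × ℝ) := by norm_num
  rw [hw, map_neg] at h
  rw [px_eq hf ((-p.1, -p.2.1, -p.2.2))]
  exact h

private lemma py_sigma (hf : ContDiff ℝ (⊤ : ℕ∞) f) (p : ℝ × ℝ × ℝ) :
    py (fun q => f (-q.1, -q.2.1, -q.2.2)) p = -(py f (-p.1, -p.2.1, -p.2.2)) := by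
  have h := deriv_along hf (hc_sigma_y p)
  have hw : ((0, 0, -1) : ℝ × ℝ × ℝ) = -((0, 0, 1) : ℝ × ℝ × ℝ) := by norm_num
  rw [hw, map_neg] at h
  rw [py_eq hf ((-p.1, -p.2.1, -p.2.2))]
  exact h

private lemma px_sigma_neg (hf : ContDiff ℝ (⊤ : ℕ∞) f) (p : ℝ × ℝ × ℝ) :
    px (fun q => -f (-q.1, -q.2.1, -q.2.2)) p = px f (-p.1, -p.2.1, -p.2.2) := by
  have h := deriv_along hf (hc_sigma_x p)
  have hw : ((0, -1, 0) : ℝ × ℝ × ℝ) = -((0, 1, 0) : ℝ × ℝ × ℝ) := by norm_num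
  rw [hw, map_neg] at h
  show deriv (fun s => -f (-p.1, -s, -p.2.2)) p.2.1 = _
  rw [deriv.fun_neg, h, px_eq hf ((-p.1, -p.2.1, -p.2.2)), neg_neg]

private lemma py_sigma_neg (hf : ContDiff ℝ (⊤ : ℕ∞) f) (p : ℝ × ℝ × ℝ) :
    py (fun q => -f (-q.1, -q.2.1, -q.2.2)) p = py f (-p.1, -p.2.1, -p.2.2) := by
  have h := deriv_along hf (hc_sigma_y p)
  have hw : ((0, 0, -1) : ℝ × ℝ × ℝ) = -((0, 0, 1) : ℝ × ℝ × ℝ) := by norm_num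
  rw [hw, map_neg] at h
  show deriv (fun s => -f (-p.1, -p.2.1, -s)) p.2.2 = _
  rw [deriv.fun_neg, h, py_eq hf ((-p.1, -p.2.1, -p.2.2)), neg_neg]

private lemma pxpx_sigma (hf : ContDiff ℝ (⊤ : ℕ∞) f) (p : ℝ × ℝ × ℝ) :
    px (px (fun q => f (-q.1, -q.2.1, -q.2.2))) p = px (px f) (-p.1, -p.2.1, -p.2.2) := by
  have h : px (fun q => f (-q.1, -q.2.1, -q.2.2)) =
      fun r => -px f (-r.1, -r.2.1, -r.2.2) := funext (px_sigma hf)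
  rw [h]
  exact px_sigma_neg (contDiff_px hf) p

private lemma pxpy_sigma (hf : ContDiff ℝ (⊤ : ℕ∞) f) (p : ℝ × ℝ × ℝ) :
    px (py (fun q => f (-q.1, -q.2.1, -q.2.2))) p = px (py f) (-p.1, -p.2.1, -p.2.2) := by
  have h : py (fun q => f (-q.1, -q.2.1, -q.2.2)) =
      fun r => -py f (-r.1, -r.2.1, -r.2.2) := funext (py_sigma hf)
  rw [h]
  exact px_sigma_neg (contDiff_py hf) p

private lemma pypy_sigma (hf : ContDiff ℝ (⊤ : ℕ∞) f) (p : ℝ × ℝ × ℝ) :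
    py (py (fun q => f (-q.1, -q.2.1, -q.2.2))) p = py (py f) (-p.1, -p.2.1, -p.2.2) := by
  have h : py (fun q => f (-q.1, -q.2.1, -q.2.2)) =
      fun r => -py f (-r.1, -r.2.1, -r.2.2) := funext (py_sigma hf)
  rw [h]
  exact py_sigma_neg (contDiff_py hf) p

/-! Chain rules for the transposition `τ : (t,x,y) ↦ (t,y,x)`. -/

private lemma pt_tau (hf : ContDiff ℝ (⊤ : ℕ∞) f) (p : ℝ × ℝ × ℝ) :
    pt (fun q => f (q.1, q.2.2, q.2.1)) p = pt f (p.1, p.2.2, p.2.1) := by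
  have hc : HasDerivAt (fun s : ℝ => ((s, p.2.2, p.2.1) : ℝ × ℝ × ℝ)) (1, 0, 0) p.1 :=
    (hasDerivAt_id p.1).prodMk ((hasDerivAt_const _ _).prodMk (hasDerivAt_const _ _))
  have h := deriv_along hf hc
  rw [pt_eq hf ((p.1, p.2.2, p.2.1))]
  exact h

private lemma px_tau (hf : ContDiff ℝ (⊤ : ℕ∞) f) (p : ℝ × ℝ × ℝ) :
    px (fun q => f (q.1, q.2.2, q.2.1)) p = py f (p.1, p.2.2, p.2.1) := by
  have hc : HasDerivAt (fun s : ℝ => ((p.1, p.2.2, s) : ℝ × ℝ × ℝ)) (0, 0, 1) p.2.1 :=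
    (hasDerivAt_const _ _).prodMk ((hasDerivAt_const _ _).prodMk (hasDerivAt_id p.2.1))
  have h := deriv_along hf hc
  rw [py_eq hf ((p.1, p.2.2, p.2.1))]
  exact h

private lemma py_tau (hf : ContDiff ℝ (⊤ : ℕ∞) f) (p : ℝ × ℝ × ℝ) :
    py (fun q => f (q.1, q.2.2, q.2.1)) p = px f (p.1, p.2.2, p.2.1) := by
  have hc : HasDerivAt (fun s : ℝ => ((p.1, s, p.2.1) : ℝ × ℝ × ℝ)) (0, 1, 0) p.2.2 :=
    (hasDerivAt_const _ _).prodMk ((hasDerivAt_id p.2.2).prodMk (hasDerivAt_const _ _))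
  have h := deriv_along hf hc
  rw [px_eq hf ((p.1, p.2.2, p.2.1))]
  exact h

private lemma pxpx_tau (hf : ContDiff ℝ (⊤ : ℕ∞) f) (p : ℝ × ℝ × ℝ) :
    px (px (fun q => f (q.1, q.2.2, q.2.1))) p = py (py f) (p.1, p.2.2, p.2.1) := by
  have h : px (fun q => f (q.1, q.2.2, q.2.1)) =
      fun r => py f (r.1, r.2.2, r.2.1) := funext (px_tau hf)
  rw [h]
  exact px_tau (contDiff_py hf) p

private lemma pxpy_tau (hf : ContDiff ℝ (⊤ : ℕ∞) f) (p : ℝ × ℝ × ℝ) :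
    px (py (fun q => f (q.1, q.2.2, q.2.1))) p = px (py f) (p.1, p.2.2, p.2.1) := by
  have h : py (fun q => f (q.1, q.2.2, q.2.1)) =
      fun r => px f (r.1, r.2.2, r.2.1) := funext (py_tau hf)
  rw [h]
  rw [px_tau (contDiff_px hf) p]
  exact clairaut hf _

private lemma pypy_tau (hf : ContDiff ℝ (⊤ : ℕ∞) f) (p : ℝ × ℝ × ℝ) :
    py (py (fun q => f (q.1, q.2.2, q.2.1))) p = px (px f) (p.1, p.2.2, p.2.1) := by
  have h : py (fun q => f (q.1, q.2.2, q.2.1)) =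
      fun r => px f (r.1, r.2.2, r.2.1) := funext (py_tau hf)
  rw [h]
  exact py_tau (contDiff_px hf) p

private lemma pt_negf (p : ℝ × ℝ × ℝ) : pt (fun q => -f q) p = -(pt f p) := deriv.neg
private lemma px_negf (p : ℝ × ℝ × ℝ) : px (fun q => -f q) p = -(px f p) := deriv.neg
private lemma py_negf (p : ℝ × ℝ × ℝ) : py (fun q => -f q) p = -(py f p) := deriv.neg

private lemma alg_a (V A B C T : ℝ) (h : T = 1 / 3 * (V ^ 3 - A ^ 3 / V ^ 3) + B * V - A * C / V) :
    -T = 1 / 3 * ((-V) ^ 3 - A ^ 3 / (-V) ^ 3) + B * -V - A * C / -V := by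
  rw [h]; ring

private lemma alg_a2 (V A W : ℝ) (h : W = -A / V) : -W = -A / -V := by rw [h]; ring

private lemma alg_c1 (V A B C T : ℝ) (hV : V ≠ 0) (hA : A ≠ 0)
    (h : T = 1 / 3 * (V ^ 3 - A ^ 3 / V ^ 3) + B * V - A * C / V) :
    T = 1 / 3 * ((-A / V) ^ 3 - A ^ 3 / (-A / V) ^ 3) + C * (-A / V) - A * B / (-A / V) := by
  have hW : (-A / V) ≠ 0 := div_ne_zero (neg_ne_zero.2 hA) hV
  have h3 : A ^ 3 / (-A / V) ^ 3 = -V ^ 3 := by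
    rw [div_eq_iff (pow_ne_zero 3 hW)]; field_simp
  have h4 : A * B / (-A / V) = -(B * V) := by
    rw [div_eq_iff hW]; field_simp
  rw [h, h3, h4]; ring

private lemma alg_c2 (V A : ℝ) (hV : V ≠ 0) (hA : A ≠ 0) : V = -A / (-A / V) := by
  rw [eq_div_iff (div_ne_zero (neg_ne_zero.2 hA) hV)]; field_simp

end helpers

theorem lax_discrete_symmetries (u v : ℝ × ℝ × ℝ → ℝ)
    (hu : ContDiff ℝ (⊤ : ℕ∞) u) (hv : ContDiff ℝ (⊤ : ℕ∞) v)
    (hvx : ∀ p : ℝ × ℝ × ℝ, px v p ≠ 0) (huv : SatisfiesLax u v) :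
    ((∀ p : ℝ × ℝ × ℝ, px (fun q => v (-q.1, -q.2.1, -q.2.2)) p ≠ 0) ∧
      SatisfiesLax (fun q => u (-q.1, -q.2.1, -q.2.2)) (fun q => v (-q.1, -q.2.1, -q.2.2))) ∧
    ((∀ p : ℝ × ℝ × ℝ, px (fun q => -v q) p ≠ 0) ∧
      SatisfiesLax u (fun q => -v q)) ∧
    ((∀ p : ℝ × ℝ × ℝ, px (py u) p ≠ 0) →
      (∀ p : ℝ × ℝ × ℝ, px (fun q => v (q.1, q.2.2, q.2.1)) p ≠ 0) ∧
      SatisfiesLax (fun q => u (q.1, q.2.2, q.2.1)) (fun q => v (q.1, q.2.2, q.2.1))) := by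
  refine ⟨⟨?_, ?_⟩, ⟨?_, ?_⟩, ?_⟩
  · -- (a) nonvanishing
    intro p
    rw [px_sigma hv p]
    exact neg_ne_zero.2 (hvx _)
  · -- (a) system
    intro p
    set q : ℝ × ℝ × ℝ := (-p.1, -p.2.1, -p.2.2) with hq
    obtain ⟨h1, h2⟩ := huv q
    rw [pt_sigma hv p, px_sigma hv p, py_sigma hv p, pxpx_sigma hu p, pxpy_sigma hu p,
      pypy_sigma hu p, ← hq]
    exact ⟨alg_a _ _ _ _ _ h1, alg_a2 _ _ _ h2⟩
  · -- (b) nonvanishing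
    intro p
    rw [px_negf p]
    exact neg_ne_zero.2 (hvx _)
  · -- (b) system
    intro p
    obtain ⟨h1, h2⟩ := huv p
    rw [pt_negf p, px_negf p, py_negf p]
    exact ⟨alg_a _ _ _ _ _ h1, alg_a2 _ _ _ h2⟩
  · -- (c)
    intro hA
    constructor
    · intro p
      rw [px_tau hv p, (huv _).2]
      exact div_ne_zero (neg_ne_zero.2 (hA _)) (hvx _)
    · intro p
      set q : ℝ × ℝ × ℝ := (p.1, p.2.2, p.2.1) with hq
      obtain ⟨h1, h2⟩ := huv q
      rw [pt_tau hv p, px_tau hv p, py_tau hv p, pxpx_tau hu p, pxpy_tau hu p, pypy_tau hu p,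
        ← hq]
      constructor
      · rw [h2]
        exact alg_c1 _ _ _ _ _ (hvx q) (hA q) h1
      · rw [h2]
        exact alg_c2 _ _ (hvx q) (hA q)
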